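/- arXiv:2103.06037 — 4 statements merged into one kernel-verified Lean document; each statement's English description precedes it below -/
import Mathlib

section
/- If nonzero real numbers Γ₁, Γ₂, Γ₃, Γ₄ satisfy 1/Γ₁ + 1/Γ₂ + 1/Γ₃ = 0 and 1/Γ₁ + 1/Γ₂ + 1/Γ₄ = 0, then Γ₃ = Γ₄ and Γ₁ + Γ₂ + Γ₃ + Γ₄ ≠ 0. -/
theorem one_div_add_one_div_add_one_div_eq_zero_iff {K : Type*} [Field K] {a b c : K}
    (ha : a ≠ 0) (hb : b ≠ 0) (hc : c ≠ 0) :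
    1 / a + 1 / b + 1 / c = 0 ↔ a * b + b * c + c * a = 0 := by
  rw [div_add_div _ _ ha hb, div_add_div _ _ (mul_ne_zero ha hb) hc,
    div_eq_zero_iff, or_iff_left (mul_ne_zero (mul_ne_zero ha hb) hc)]
  constructor <;> intro h <;> linear_combination h

/-- Substituting `b = -a - 2c` turns `ab + bc + ca` into `-((a + c)² + c²)`. -/
theorem eq_zero_of_mul_add_mul_add_mul_eq_zero_of_add_add_two_mul_eq_zero {K : Type*} [Field K]
    [LinearOrder K] [IsStrictOrderedRing K] {a b c : K}
    (hprod : a * b + b * c + c * a = 0) (hsum : a + b + 2 * c = 0) : c = 0 := by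
  have hsq : (a + c) ^ 2 + c ^ 2 = 0 := by linear_combination (a + c) * hsum - hprod
  exact pow_eq_zero_iff two_ne_zero |>.1
    ((add_eq_zero_iff_of_nonneg (sq_nonneg _) (sq_nonneg _)).1 hsq).2

theorem diagramVIII_vorticity_constraints_general
    (Γ₁ Γ₂ Γ₃ Γ₄ : ℝ) (h₁ : Γ₁ ≠ 0) (h₂ : Γ₂ ≠ 0) (h₃ : Γ₃ ≠ 0)
    (ha : 1/Γ₁ + 1/Γ₂ + 1/Γ₃ = 0) (hb : 1/Γ₁ + 1/Γ₂ + 1/Γ₄ = 0) :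
    Γ₃ = Γ₄ ∧ Γ₁ + Γ₂ + Γ₃ + Γ₄ ≠ 0 := by
  have h34 : Γ₃ = Γ₄ := by
    simpa only [one_div, inv_inj] using (by linarith : 1/Γ₃ = 1/Γ₄)
  refine ⟨h34, fun hsum => h₃ ?_⟩
  subst h34
  exact eq_zero_of_mul_add_mul_add_mul_eq_zero_of_add_add_two_mul_eq_zero
    ((one_div_add_one_div_add_one_div_eq_zero_iff h₁ h₂ h₃).1 ha) (by linarith)

theorem diagramVIII_vorticity_constraints
    (Γ₁ Γ₂ Γ₃ Γ₄ : ℝ) (h₁ : Γ₁ ≠ 0) (h₂ : Γ₂ ≠ 0) (h₃ : Γ₃ ≠ 0) (h₄ : Γ₄ ≠ 0)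
    (ha : 1/Γ₁ + 1/Γ₂ + 1/Γ₃ = 0) (hb : 1/Γ₁ + 1/Γ₂ + 1/Γ₄ = 0) :
    Γ₃ = Γ₄ ∧ Γ₁ + Γ₂ + Γ₃ + Γ₄ ≠ 0 :=
  diagramVIII_vorticity_constraints_general Γ₁ Γ₂ Γ₃ Γ₄ h₁ h₂ h₃ ha hb
end

section
/- The only real solutions (Γ₁, Γ₂, Γ₃, Γ₄) with all Γᵢ nonzero of the system Γ₁Γ₃ = Γ₂Γ₄, Γ₁Γ₄ = Γ₂Γ₃, and Γ₁Γ₂ + Γ₂Γ₃ + Γ₃Γ₁ + Γ₄(Γ₁+Γ₂+Γ₃) = 0, are given by Γ₁ = Γ₂ and Γ₃ = Γ₄ = (−2−√3)Γ₁ or Γ₃ = Γ₄ = (−2+√3)Γ₁. -/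
/-!
Subtracting and adding the two product equations gives `(Γ₁ + Γ₂)(Γ₃ - Γ₄) = 0` and
`(Γ₁ - Γ₂)(Γ₃ + Γ₄) = 0`. Since `Γ₁, Γ₃ ≠ 0`, the only branch other than `Γ₁ = Γ₂, Γ₃ = Γ₄` is
`Γ₂ = -Γ₁, Γ₄ = -Γ₃`, where the angular momentum is `-(Γ₁² + Γ₃²) ≠ 0`. On the main branch it is
`Γ₁² + 4Γ₁Γ₃ + Γ₃²`, whose roots in `Γ₃ / Γ₁` are `-2 ± √3`.
-/

theorem sq_add_four_mul_add_sq_eq_zero_iff {R : Type*} [CommRing R] [NoZeroDivisors R]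
    {s : R} (hs : s ^ 2 = 3) (x y : R) :
    x ^ 2 + 4 * x * y + y ^ 2 = 0 ↔ y = (-2 - s) * x ∨ y = (-2 + s) * x := by
  have factor : x ^ 2 + 4 * x * y + y ^ 2 = (y - (-2 - s) * x) * (y - (-2 + s) * x) := by
    linear_combination x ^ 2 * hs
  rw [factor, mul_eq_zero, sub_eq_zero, sub_eq_zero]

theorem eq_and_eq_of_mul_eq_mul_of_sum_mul_eq_zero {K : Type*} [Field K] [LinearOrder K]
    [IsStrictOrderedRing K] {a b c d : K} (ha : a ≠ 0) (hc : c ≠ 0)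
    (hac : a * c = b * d) (had : a * d = b * c)
    (hL : a * b + b * c + c * a + d * (a + b + c) = 0) : a = b ∧ c = d := by
  have hplus : (a + b) * (c - d) = 0 := by linear_combination hac - had
  have hminus : (a - b) * (c + d) = 0 := by linear_combination hac + had
  rcases mul_eq_zero.1 hplus with hab | hcd <;> rcases mul_eq_zero.1 hminus with hab' | hcd'
  · exact absurd (by linarith : a = 0) ha
  · have hb : b = -a := by linear_combination hab
    have hd : d = -c := by linear_combination hcd'
    subst hb hd
    exact absurd (eq_zero_of_mul_self_add_mul_self_eq_zero (b := c) (by linear_combination -hL)) ha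
  · exact ⟨by linear_combination hab', by linear_combination hcd⟩
  · exact absurd (by linarith : c = 0) hc

theorem collapse_exceptional_vorticities_general
    (Γ₁ Γ₂ Γ₃ Γ₄ : ℝ) (h₁ : Γ₁ ≠ 0) (h₃ : Γ₃ ≠ 0) :
    (Γ₁*Γ₃ = Γ₂*Γ₄ ∧ Γ₁*Γ₄ = Γ₂*Γ₃ ∧
      Γ₁*Γ₂ + Γ₂*Γ₃ + Γ₃*Γ₁ + Γ₄*(Γ₁+Γ₂+Γ₃) = 0) ↔
    (Γ₁ = Γ₂ ∧
      ((Γ₃ = Γ₄ ∧ Γ₃ = (-2 - Real.sqrt 3) * Γ₁) ∨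
       (Γ₃ = Γ₄ ∧ Γ₃ = (-2 + Real.sqrt 3) * Γ₁))) := by
  have quadratic := sq_add_four_mul_add_sq_eq_zero_iff (Real.sq_sqrt (by norm_num : (0 : ℝ) ≤ 3))
  constructor
  · rintro ⟨hac, had, hL⟩
    obtain ⟨rfl, rfl⟩ := eq_and_eq_of_mul_eq_mul_of_sum_mul_eq_zero h₁ h₃ hac had hL
    rcases (quadratic Γ₁ Γ₃).1 (by linear_combination hL) with h | h
    exacts [⟨rfl, .inl ⟨rfl, h⟩⟩, ⟨rfl, .inr ⟨rfl, h⟩⟩]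
  · rintro ⟨rfl, ⟨rfl, h⟩ | ⟨rfl, h⟩⟩
    · exact ⟨rfl, rfl, by linear_combination (quadratic Γ₁ Γ₃).2 (.inl h)⟩
    · exact ⟨rfl, rfl, by linear_combination (quadratic Γ₁ Γ₃).2 (.inr h)⟩

theorem collapse_exceptional_vorticities
    (Γ₁ Γ₂ Γ₃ Γ₄ : ℝ) (h₁ : Γ₁ ≠ 0) (h₂ : Γ₂ ≠ 0) (h₃ : Γ₃ ≠ 0) (h₄ : Γ₄ ≠ 0) :
    (Γ₁*Γ₃ = Γ₂*Γ₄ ∧ Γ₁*Γ₄ = Γ₂*Γ₃ ∧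
      Γ₁*Γ₂ + Γ₂*Γ₃ + Γ₃*Γ₁ + Γ₄*(Γ₁+Γ₂+Γ₃) = 0) ↔
    (Γ₁ = Γ₂ ∧
      ((Γ₃ = Γ₄ ∧ Γ₃ = (-2 - Real.sqrt 3) * Γ₁) ∨
       (Γ₃ = Γ₄ ∧ Γ₃ = (-2 + Real.sqrt 3) * Γ₁))) :=
  collapse_exceptional_vorticities_general Γ₁ Γ₂ Γ₃ Γ₄ h₁ h₃
end

section
/- There are no real numbers Γ₁, Γ₂, Γ₃, Γ₄ satisfying simultaneously (Γ₁−Γ₂)(Γ₃−Γ₄)(Γ₁+Γ₂+Γ₃+Γ₄) = 0, Γ₁Γ₂ − Γ₃Γ₄ = 0, (Γ₁Γ₃ − Γ₂Γ₄)(Γ₁Γ₄ − Γ₂Γ₃) ≠ 0, and Γ₁Γ₂+Γ₂Γ₃+Γ₃Γ₁+Γ₄(Γ₁+Γ₂+Γ₃) = 0, with all Γᵢ nonzero. -/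
/-!
If `Γ₁ + Γ₂ + Γ₃ + Γ₄ = 0`, the vanishing of the second elementary symmetric function forces
`Γ₁² + Γ₂² + Γ₃² + Γ₄² = 0`. If `Γ₁ = Γ₂ = a`, the two equations say `Γ₃ + Γ₄ = -a` and
`Γ₃ Γ₄ = a²`, so `Γ₃, Γ₄` are roots of `t² + a t + a²`, whose discriminant `-3a²` is negative.
The case `Γ₃ = Γ₄` is the same after exchanging the pairs `(Γ₁, Γ₂)` and `(Γ₃, Γ₄)`.
-/

variable {K : Type*} [CommRing K] [LinearOrder K] [IsStrictOrderedRing K]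

theorem eq_zero_of_add_eq_zero_of_pair_sum_eq_zero {a b c d : K} (hsum : a + b + c + d = 0)
    (hpairs : a * b + b * c + c * a + d * (a + b + c) = 0) : a = 0 := by
  have hsq : a ^ 2 + b ^ 2 + c ^ 2 + d ^ 2 = 0 := by
    linear_combination (a + b + c + d) * hsum - 2 * hpairs
  nlinarith [sq_nonneg a, sq_nonneg b, sq_nonneg c, sq_nonneg d]

theorem not_add_eq_neg_and_mul_eq_sq {a c d : K} (ha : a ≠ 0) :
    ¬ (c + d = -a ∧ c * d = a ^ 2) := by
  rintro ⟨hsum, hprod⟩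
  have hdisc : (c - d) ^ 2 = -3 * a ^ 2 := by
    linear_combination (c + d - a) * hsum - 4 * hprod
  nlinarith [sq_nonneg (c - d), pow_pos (sq_pos_of_ne_zero ha) 1]

theorem false_of_mul_self_eq_mul_of_pair_sum_eq_zero {a c d : K} (ha : a ≠ 0)
    (hprod : a * a = c * d) (hpairs : a * a + a * c + c * a + d * (a + a + c) = 0) : False := by
  have hsum : c + d = -a := by
    have h : (2 * a) * (a + c + d) = 0 := by linear_combination hpairs + hprod
    have := (mul_eq_zero.1 h).resolve_left (mul_ne_zero two_ne_zero ha)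
    linear_combination this
  exact not_add_eq_neg_and_mul_eq_sq ha ⟨hsum, by linear_combination -hprod⟩

theorem no_common_solution_collapse_claim :
    ¬ ∃ Γ₁ Γ₂ Γ₃ Γ₄ : ℝ, Γ₁ ≠ 0 ∧ Γ₂ ≠ 0 ∧ Γ₃ ≠ 0 ∧ Γ₄ ≠ 0 ∧
      (Γ₁ - Γ₂) * (Γ₃ - Γ₄) * (Γ₁ + Γ₂ + Γ₃ + Γ₄) = 0 ∧
      Γ₁*Γ₂ - Γ₃*Γ₄ = 0 ∧
      (Γ₁*Γ₃ - Γ₂*Γ₄) * (Γ₁*Γ₄ - Γ₂*Γ₃) ≠ 0 ∧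
      Γ₁*Γ₂ + Γ₂*Γ₃ + Γ₃*Γ₁ + Γ₄*(Γ₁+Γ₂+Γ₃) = 0 := by
  rintro ⟨a, b, c, d, ha, -, hc, -, hcases, hprod, -, hpairs⟩
  rcases mul_eq_zero.1 hcases with hpair | hsum
  · rcases mul_eq_zero.1 hpair with hab | hcd
    · obtain rfl : a = b := sub_eq_zero.1 hab
      exact false_of_mul_self_eq_mul_of_pair_sum_eq_zero ha (sub_eq_zero.1 hprod) hpairs
    · obtain rfl : c = d := sub_eq_zero.1 hcd
      exact false_of_mul_self_eq_mul_of_pair_sum_eq_zero (c := a) (d := b) hc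
        (by linear_combination -hprod) (by linear_combination hpairs)
  · exact ha (eq_zero_of_add_eq_zero_of_pair_sum_eq_zero hsum hpairs)
end

section
/- Let Γ₁,…,Γ_N be nonzero real numbers and z₁,…,z_N distinct complex numbers. If the configuration is an equilibrium, i.e., Σ_{j≠n} Γⱼ/(conj(z_n) − conj(z_j)) = 0 for all n, then L = Σ_{j<k} ΓⱼΓₖ = 0. -/
open Finset

/-!
Multiplying the `n`-th equilibrium equation by `Γₙ zₙ` (with `zₙ` conjugated) and summing over `n`
gives `∑_{n ≠ j} Γₙ Γⱼ zₙ / (zₙ - zⱼ) = 0`. Pairing the terms `(j, k)` and `(k, j)` and using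
`zⱼ / (zⱼ - zₖ) + zₖ / (zₖ - zⱼ) = 1`, the left-hand side is `L = ∑_{j < k} Γⱼ Γₖ`.
-/

section PairSums

variable {ι M : Type*} [Fintype ι] [AddCommMonoid M]

theorem sum_sum_erase_eq_sum_filter_ne [DecidableEq ι] (f : ι → ι → M) :
    ∑ n, ∑ j ∈ univ.erase n, f n j = ∑ p : ι × ι with p.1 ≠ p.2, f p.1 p.2 := by
  rw [sum_filter, Fintype.sum_prod_type]
  refine sum_congr rfl fun n _ => ?_
  rw [← filter_ne, sum_filter]

theorem sum_filter_ne_eq_sum_filter_lt_add_swap [LinearOrder ι] (f : ι × ι → M) :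
    ∑ p : ι × ι with p.1 ≠ p.2, f p = ∑ p : ι × ι with p.1 < p.2, (f p + f p.swap) := by
  have hsplit : univ.filter (fun p : ι × ι => p.1 ≠ p.2)
      = univ.filter (fun p : ι × ι => p.1 < p.2) ∪ univ.filter (fun p : ι × ι => p.2 < p.1) := by
    ext p
    simp only [mem_filter, mem_union, mem_univ, true_and, ne_iff_lt_or_gt]
  have hdisj : Disjoint (univ.filter fun p : ι × ι => p.1 < p.2)
      (univ.filter fun p : ι × ι => p.2 < p.1) :=
    disjoint_filter.mpr fun _ _ h => lt_asymm h
  have hswap : ∑ p : ι × ι with p.2 < p.1, f p = ∑ p : ι × ι with p.1 < p.2, f p.swap :=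
    sum_nbij' Prod.swap Prod.swap (by simp) (by simp) (by simp) (by simp) (by simp)
  rw [hsplit, sum_union hdisj, hswap, sum_add_distrib]

end PairSums

theorem div_sub_add_div_sub_swap {K : Type*} [Field K] {a b : K} (h : a ≠ b) :
    a / (a - b) + b / (b - a) = 1 := by
  have hab : a - b ≠ 0 := sub_ne_zero.mpr h
  rw [← neg_sub a b, div_neg, ← sub_eq_add_neg, ← sub_div, div_self hab]

theorem sum_mul_sum_div_sub_eq_sum_filter_lt {ι K : Type*} [Fintype ι] [LinearOrder ι] [Field K]
    (Γ z : ι → K) (hz : Function.Injective z) :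
    ∑ n, Γ n * z n * ∑ j ∈ univ.erase n, Γ j / (z n - z j)
      = ∑ p : ι × ι with p.1 < p.2, Γ p.1 * Γ p.2 := by
  simp_rw [mul_sum]
  rw [sum_sum_erase_eq_sum_filter_ne (fun n j => Γ n * z n * (Γ j / (z n - z j))),
    sum_filter_ne_eq_sum_filter_lt_add_swap]
  refine sum_congr rfl fun p hp => ?_
  have hne : z p.1 ≠ z p.2 := hz.ne (mem_filter.mp hp).2.ne
  calc Γ p.1 * z p.1 * (Γ p.2 / (z p.1 - z p.2)) + Γ p.2 * z p.2 * (Γ p.1 / (z p.2 - z p.1))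
      = Γ p.1 * Γ p.2 * (z p.1 / (z p.1 - z p.2) + z p.2 / (z p.2 - z p.1)) := by ring
    _ = Γ p.1 * Γ p.2 := by rw [div_sub_add_div_sub_swap hne, mul_one]

theorem equilibrium_implies_L_zero_general
    (N : ℕ) (Γ : Fin N → ℝ)
    (z : Fin N → ℂ) (hz : Function.Injective z)
    (heq : ∀ n, ∑ j ∈ Finset.univ.erase n,
      (Γ j : ℂ) / (starRingEnd ℂ (z n) - starRingEnd ℂ (z j)) = 0) :
    ∑ p ∈ Finset.univ.filter (fun p : Fin N × Fin N => p.1 < p.2),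
      Γ p.1 * Γ p.2 = 0 := by
  have key := sum_mul_sum_div_sub_eq_sum_filter_lt (fun n => (Γ n : ℂ))
    (fun n => starRingEnd ℂ (z n)) ((starRingEnd ℂ).injective.comp hz)
  simp only [heq, mul_zero, sum_const_zero] at key
  exact_mod_cast key.symm

theorem equilibrium_implies_L_zero
    (N : ℕ) (Γ : Fin N → ℝ) (hΓ : ∀ n, Γ n ≠ 0)
    (z : Fin N → ℂ) (hz : Function.Injective z)
    (heq : ∀ n, ∑ j ∈ Finset.univ.erase n,
      (Γ j : ℂ) / (starRingEnd ℂ (z n) - starRingEnd ℂ (z j)) = 0) :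
    ∑ p ∈ Finset.univ.filter (fun p : Fin N × Fin N => p.1 < p.2),
      Γ p.1 * Γ p.2 = 0 :=
  equilibrium_implies_L_zero_general N Γ z hz heq
end
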